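/- arXiv:1801.09401 — 6 statements merged into one kernel-verified Lean document; each statement's English description precedes it below -/
import Mathlib

section
/- Let e be a potential event and let γ, γ' : ℕ⁺ → ℕ⁺ be such that both (e, γ) and (e, γ') are actual events. Then |Φ(e)(γ(n)) − Φ(e)(γ'(n))| ≤ 1/n for every n ∈ ℕ⁺; in particular the sequences n ↦ Φ(e)(γ(n)) and n ↦ Φ(e)(γ'(n)) converge to the same real number. -/
/-- A potential event: a sequence of `0`s and `1`s indexed by positive naturals
(the value at `0` is irrelevant). -/
def IsPotential (e : ℕ → ℕ) : Prop := ∀ n, 1 ≤ n → e n ≤ 1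

/-- The frequency (rate of success) `Φ(e)(n) = (∑_{i=1}^n e(i)) / n`. -/
def freq (e : ℕ → ℕ) (n : ℕ) : ℚ := (∑ i ∈ Finset.Icc 1 n, (e i : ℚ)) / (n : ℚ)

/-- `(e, γ)` is an actual event: `γ : ℕ⁺ → ℕ⁺` is strictly increasing and
`|Φ(e)(γ(n)+i) − Φ(e)(γ(n)+j)| ≤ 1/n` for all `n ∈ ℕ⁺`, `i j ∈ ℕ`. -/
def IsActual (e : ℕ → ℕ) (γ : ℕ → ℕ) : Prop :=
  (∀ n, 1 ≤ n → 1 ≤ γ n) ∧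
  (∀ m n, 1 ≤ m → m < n → γ m < γ n) ∧
  (∀ n, 1 ≤ n → ∀ i j : ℕ, |freq e (γ n + i) - freq e (γ n + j)| ≤ 1 / (n : ℚ))

/-! Whichever of `γ n`, `γ' n` comes first, the other one is a later time, so the defining bound
of that actual event gives the `1 / n` estimate. The same bound, applied at `γ N`, makes each
frequency sequence `n ↦ Φ(e)(γ n)` Cauchy, and the estimate forces the two limits to agree. -/

namespace IsActual

variable {e γ : ℕ → ℕ}

theorem strictMonoOn (h : IsActual e γ) : StrictMonoOn γ (Set.Ici 1) :=
  fun a ha b _ hab => h.2.1 a b ha hab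

theorem abs_freq_sub_le (h : IsActual e γ) {n k l : ℕ} (hn : 1 ≤ n) (hk : γ n ≤ k)
    (hl : γ n ≤ l) : |(freq e k : ℝ) - freq e l| ≤ 1 / n := by
  obtain ⟨i, rfl⟩ := Nat.exists_eq_add_of_le hk
  obtain ⟨j, rfl⟩ := Nat.exists_eq_add_of_le hl
  have := (Rat.cast_le (K := ℝ)).2 (h.2.2 n hn i j)
  push_cast at this
  exact this

theorem cauchySeq_freq (h : IsActual e γ) : CauchySeq fun n => (freq e (γ n) : ℝ) := by
  rw [Metric.cauchySeq_iff']
  intro ε hε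
  obtain ⟨N, hN⟩ := exists_nat_one_div_lt hε
  refine ⟨N + 1, fun n hn => ?_⟩
  rw [Real.dist_eq]
  have hγ : γ (N + 1) ≤ γ n :=
    h.strictMonoOn.monotoneOn N.succ_pos (N.succ_pos.trans_le hn) hn
  calc |(freq e (γ n) : ℝ) - freq e (γ (N + 1))|
      ≤ 1 / ((N + 1 : ℕ) : ℝ) := h.abs_freq_sub_le N.succ_pos hγ le_rfl
    _ < ε := by exact_mod_cast hN

end IsActual

theorem abs_freq_sub_le_of_isActual {e γ γ' : ℕ → ℕ} (h : IsActual e γ) (h' : IsActual e γ')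
    {n : ℕ} (hn : 1 ≤ n) : |(freq e (γ n) : ℝ) - freq e (γ' n)| ≤ 1 / n := by
  rcases le_total (γ n) (γ' n) with hle | hle
  · exact h.abs_freq_sub_le hn le_rfl hle
  · rw [abs_sub_comm]
    exact h'.abs_freq_sub_le hn le_rfl hle

theorem stmt1_general (e γ γ' : ℕ → ℕ)
    (h : IsActual e γ) (h' : IsActual e γ') :
    (∀ n : ℕ, 1 ≤ n → |freq e (γ n) - freq e (γ' n)| ≤ 1 / (n : ℚ)) ∧
    ∃ p : ℝ,
      Filter.Tendsto (fun n => (freq e (γ n) : ℝ)) Filter.atTop (nhds p) ∧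
      Filter.Tendsto (fun n => (freq e (γ' n) : ℝ)) Filter.atTop (nhds p) := by
  refine ⟨fun n hn => (Rat.cast_le (K := ℝ)).1 ?_, ?_⟩
  · push_cast
    exact abs_freq_sub_le_of_isActual h h' hn
  obtain ⟨p, hp⟩ := cauchySeq_tendsto_of_complete h.cauchySeq_freq
  refine ⟨p, hp, hp.congr_dist (squeeze_zero' ?_ ?_ tendsto_one_div_atTop_nhds_zero_nat)⟩
  · exact Filter.Eventually.of_forall fun n => dist_nonneg
  · filter_upwards [Filter.eventually_ge_atTop 1] with n hn
    exact (Real.dist_eq _ _).trans_le (abs_freq_sub_le_of_isActual h h' hn)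

theorem stmt1 (e γ γ' : ℕ → ℕ) (he : IsPotential e)
    (h : IsActual e γ) (h' : IsActual e γ') :
    (∀ n : ℕ, 1 ≤ n → |freq e (γ n) - freq e (γ' n)| ≤ 1 / (n : ℚ)) ∧
    ∃ p : ℝ,
      Filter.Tendsto (fun n => (freq e (γ n) : ℝ)) Filter.atTop (nhds p) ∧
      Filter.Tendsto (fun n => (freq e (γ' n) : ℝ)) Filter.atTop (nhds p) :=
  stmt1_general e γ γ' h h'
end

section
/- Let (e, γ) and (e', γ') be actual events such that e(n)·e'(n) = 0 for every n ∈ ℕ⁺ (i.e. e ∧ e' = ⊥). Define η(n) := γ(2n) + γ'(2n) and let e ∨ e' be the potential event (e ∨ e')(n) = e(n) + e'(n) − e(n)e'(n). Then (e ∨ e', η) is an actual event. -/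
/-! Since `e ∧ e' = ⊥`, the frequency of `e ∨ e'` is the sum of the two frequencies; past both
`γ(2n)` and `γ'(2n)` each of these oscillates by at most `1/(2n)`, so the sum oscillates by at
most `1/n`. -/

lemma freq_or_eq_add_of_disjoint {e e' : ℕ → ℕ} (hdisj : ∀ n, 1 ≤ n → e n * e' n = 0) (n : ℕ) :
    freq (fun k => e k + e' k - e k * e' k) n = freq e n + freq e' n := by
  rw [freq, freq, freq, ← add_div, ← Finset.sum_add_distrib]
  congr 1
  refine Finset.sum_congr rfl fun i hi => ?_
  simp only [hdisj i (Finset.mem_Icc.mp hi).1, Nat.sub_zero, Nat.cast_add]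

lemma IsActual.abs_freq_sub_le_s4 {e γ : ℕ → ℕ} (h : IsActual e γ) {n M N : ℕ} (hn : 1 ≤ n)
    (hM : γ n ≤ M) (hN : γ n ≤ N) : |freq e M - freq e N| ≤ 1 / (n : ℚ) := by
  obtain ⟨i, rfl⟩ := Nat.exists_eq_add_of_le hM
  obtain ⟨j, rfl⟩ := Nat.exists_eq_add_of_le hN
  exact h.2.2 n hn i j

lemma abs_add_sub_add_le (a b c d : ℚ) : |a + b - (c + d)| ≤ |a - c| + |b - d| := by
  rw [add_sub_add_comm]
  exact abs_add_le _ _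

theorem stmt4_general (e e' γ γ' : ℕ → ℕ)
    (h : IsActual e γ) (h' : IsActual e' γ')
    (hdisj : ∀ n, 1 ≤ n → e n * e' n = 0) :
    IsActual (fun n => e n + e' n - e n * e' n) (fun n => γ (2 * n) + γ' (2 * n)) := by
  refine ⟨fun n hn => ?_, fun m n hm hmn => ?_, fun n hn i j => ?_⟩
  · have := h.1 (2 * n) (by omega)
    dsimp only
    omega
  · have := h.2.1 (2 * m) (2 * n) (by omega) (by omega)
    have := h'.2.1 (2 * m) (2 * n) (by omega) (by omega)
    dsimp only
    omega
  · simp only [freq_or_eq_add_of_disjoint hdisj]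
    have hn2 : 1 ≤ 2 * n := by omega
    calc _ ≤ _ := abs_add_sub_add_le _ _ _ _
      _ ≤ 1 / ((2 * n : ℕ) : ℚ) + 1 / ((2 * n : ℕ) : ℚ) :=
          add_le_add (h.abs_freq_sub_le_s4 hn2 (by omega) (by omega))
            (h'.abs_freq_sub_le_s4 hn2 (by omega) (by omega))
      _ = 1 / (n : ℚ) := by
          have : (n : ℚ) ≠ 0 := by exact_mod_cast (show n ≠ 0 by omega)
          push_cast
          field_simp
          norm_num

theorem stmt4 (e e' γ γ' : ℕ → ℕ) (he : IsPotential e) (he' : IsPotential e')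
    (h : IsActual e γ) (h' : IsActual e' γ')
    (hdisj : ∀ n, 1 ≤ n → e n * e' n = 0) :
    IsActual (fun n => e n + e' n - e n * e' n) (fun n => γ (2 * n) + γ' (2 * n)) :=
  stmt4_general e e' γ γ' h h' hdisj
end

section
/- Let (e, γ) be an actual event whose probability is 0, i.e. the sequence n ↦ Φ(e)(γ(n)) converges to 0, and let e' be a potential event with e'(n) ≤ e(n) for every n ∈ ℕ⁺. Then (e', n ↦ γ(6n)) is an actual event. -/
/-!
Since `γ` is increasing, every frequency `Φ(e)(γ(N) + i)` lies within `1/N` of `Φ(e)(γ(M))`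
for all `M ≥ N`; letting `M → ∞` gives `Φ(e)(γ(N) + i) ≤ 1/N`. A dominated event `e' ≤ e`
then has all its frequencies past `γ(N)` in `[0, 1/N]`, so they oscillate by at most `1/N`,
and any reindexing `n ↦ γ(k n)` with `k ≥ 1` keeps the bound `1/n`.
-/

lemma freq_nonneg (e : ℕ → ℕ) (n : ℕ) : 0 ≤ freq e n :=
  div_nonneg (Finset.sum_nonneg fun _ _ => Nat.cast_nonneg _) (Nat.cast_nonneg _)

lemma freq_le_freq_of_le {e e' : ℕ → ℕ} (hle : ∀ n, 1 ≤ n → e' n ≤ e n) (n : ℕ) :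
    freq e' n ≤ freq e n := by
  refine div_le_div_of_nonneg_right (Finset.sum_le_sum fun i hi => ?_) (Nat.cast_nonneg _)
  exact_mod_cast hle i (Finset.mem_Icc.mp hi).1

namespace IsActual

variable {e γ : ℕ → ℕ}

lemma freq_le_freq_add_inv (h : IsActual e γ) {N M : ℕ} (hN : 1 ≤ N) (hNM : N ≤ M)
    (i : ℕ) : freq e (γ N + i) ≤ freq e (γ M) + 1 / N := by
  have hγ : γ N ≤ γ M :=
    hNM.eq_or_lt.elim (fun hEq => hEq ▸ le_rfl) fun hlt => (h.2.1 N M hN hlt).le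
  have hosc := h.2.2 N hN i (γ M - γ N)
  rw [Nat.add_sub_cancel' hγ] at hosc
  linarith [(abs_le.mp hosc).2]

lemma freq_le_inv_of_tendsto_zero (h : IsActual e γ)
    (hnull : Filter.Tendsto (fun n => (freq e (γ n) : ℝ)) Filter.atTop (nhds 0))
    {N : ℕ} (hN : 1 ≤ N) (i : ℕ) : freq e (γ N + i) ≤ 1 / N := by
  have hlim : Filter.Tendsto (fun M => (freq e (γ M) : ℝ) + ((1 / N : ℚ) : ℝ))
      Filter.atTop (nhds ((1 / N : ℚ) : ℝ)) := by
    simpa using hnull.add_const ((1 / N : ℚ) : ℝ)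
  have hreal : ((freq e (γ N + i) : ℚ) : ℝ) ≤ ((1 / N : ℚ) : ℝ) := by
    refine ge_of_tendsto hlim ?_
    filter_upwards [Filter.eventually_ge_atTop N] with M hM
    exact_mod_cast h.freq_le_freq_add_inv hN hM i
  exact_mod_cast hreal

theorem of_le_of_tendsto_zero {e' : ℕ → ℕ} (h : IsActual e γ)
    (hnull : Filter.Tendsto (fun n => (freq e (γ n) : ℝ)) Filter.atTop (nhds 0))
    (hle : ∀ n, 1 ≤ n → e' n ≤ e n) {k : ℕ} (hk : 1 ≤ k) :
    IsActual e' (fun n => γ (k * n)) := by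
  refine ⟨fun n hn => h.1 (k * n) (Nat.one_le_iff_ne_zero.mpr (by positivity)),
    fun m n hm hmn => h.2.1 (k * m) (k * n) (by nlinarith) (by nlinarith), fun n hn i j => ?_⟩
  have hkn : 1 ≤ k * n := by nlinarith
  have hbound : ∀ i, freq e' (γ (k * n) + i) ≤ 1 / n := fun i =>
    calc freq e' (γ (k * n) + i)
        ≤ freq e (γ (k * n) + i) := freq_le_freq_of_le hle _
      _ ≤ 1 / ((k * n : ℕ) : ℚ) := h.freq_le_inv_of_tendsto_zero hnull hkn i
      _ ≤ 1 / n :=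
        one_div_le_one_div_of_le (by exact_mod_cast hn) (by exact_mod_cast by nlinarith)
  exact abs_sub_le_of_nonneg_of_le (freq_nonneg _ _) (hbound i) (freq_nonneg _ _) (hbound j)

end IsActual

theorem stmt5_general (e e' γ : ℕ → ℕ) (h : IsActual e γ)
    (hnull : Filter.Tendsto (fun n => (freq e (γ n) : ℝ)) Filter.atTop (nhds 0))
    (hle : ∀ n, 1 ≤ n → e' n ≤ e n) :
    IsActual e' (fun n => γ (6 * n)) :=
  h.of_le_of_tendsto_zero hnull hle (by norm_num)

theorem stmt5 (e e' γ : ℕ → ℕ) (he : IsPotential e) (h : IsActual e γ)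
    (hnull : Filter.Tendsto (fun n => (freq e (γ n) : ℝ)) Filter.atTop (nhds 0))
    (hle : ∀ n, 1 ≤ n → e' n ≤ e n) :
    IsActual e' (fun n => γ (6 * n)) :=
  stmt5_general e e' γ h hnull hle
end

section
/- Let e, e' be potential events, define e ∧ e' := n ↦ e(n)e'(n) and e ∨ e' := n ↦ e(n) + e'(n) − e(n)e'(n), and suppose (e, α), (e', β), (e ∧ e', γ), (e ∨ e', δ) are all actual events, with probabilities p, p', q, r respectively (the limits of the corresponding frequency sequences). Then r + q = p + p'. -/
open Filter Topology

/-
The defining condition of an actual event `(e, γ)` says that from time `γ n` on the frequencies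
of `e` stay within `1 / n` of each other, so the whole frequency sequence `Φ(e)` converges, to the
probability of `(e, γ)`. Since `(e ∨ e') + (e ∧ e') = e + e'` pointwise and `Φ` is additive,
`Φ(e ∨ e') + Φ(e ∧ e') = Φ(e) + Φ(e')`, and uniqueness of limits gives `r + q = p + p'`.
-/

section Freq

variable {a b : ℕ → ℕ}

theorem freq_add (n : ℕ) : freq (fun k => a k + b k) n = freq a n + freq b n := by
  simp only [freq, Nat.cast_add, Finset.sum_add_distrib, add_div]

theorem freq_congr (h : ∀ i, 1 ≤ i → a i = b i) (n : ℕ) : freq a n = freq b n := by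
  unfold freq
  congr 1
  exact Finset.sum_congr rfl fun i hi => by rw [h i (Finset.mem_Icc.1 hi).1]

theorem freq_or_add_freq_and {e e' : ℕ → ℕ} (he' : IsPotential e') (n : ℕ) :
    freq (fun k => e k + e' k - e k * e' k) n + freq (fun k => e k * e' k) n =
      freq e n + freq e' n := by
  rw [← freq_add, ← freq_add]
  refine freq_congr (fun i hi => ?_) n
  have : e i * e' i ≤ e i := mul_le_of_le_one_right' (he' i hi)
  omega

end Freq

namespace IsActual

variable {e γ : ℕ → ℕ}

theorem dist_freq_le (h : IsActual e γ) {n k : ℕ} (hn : 1 ≤ n) (hk : γ n ≤ k) :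
    dist (freq e k : ℝ) (freq e (γ n)) ≤ 1 / n := by
  obtain ⟨i, rfl⟩ := Nat.exists_eq_add_of_le hk
  have := h.2.2 n hn i 0
  rw [add_zero] at this
  simpa [Real.dist_eq] using (Rat.cast_le (K := ℝ)).2 this

theorem tendsto_freq (h : IsActual e γ) {p : ℝ}
    (hp : Tendsto (fun n => (freq e (γ n) : ℝ)) atTop (𝓝 p)) :
    Tendsto (fun k => (freq e k : ℝ)) atTop (𝓝 p) := by
  refine Metric.tendsto_atTop.2 fun ε hε => ?_
  have hgood : ∀ᶠ n : ℕ in atTop,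
      1 ≤ n ∧ 1 / (n : ℝ) < ε / 2 ∧ dist (freq e (γ n) : ℝ) p < ε / 2 :=
    (eventually_ge_atTop 1).and
      ((tendsto_one_div_atTop_nhds_zero_nat.eventually (gt_mem_nhds (half_pos hε))).and
        (Metric.tendsto_nhds.1 hp _ (half_pos hε)))
  obtain ⟨n, hn, hinv, hdist⟩ := hgood.exists
  refine ⟨γ n, fun k hk => ?_⟩
  calc dist (freq e k : ℝ) p
      ≤ dist (freq e k : ℝ) (freq e (γ n)) + dist (freq e (γ n) : ℝ) p := dist_triangle _ _ _
    _ < ε / 2 + ε / 2 := add_lt_add_of_le_of_lt ((h.dist_freq_le hn hk).trans hinv.le) hdist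
    _ = ε := add_halves ε

end IsActual

theorem stmt7_general (e e' α β γ δ : ℕ → ℕ) (he' : IsPotential e')
    (hα : IsActual e α) (hβ : IsActual e' β)
    (hγ : IsActual (fun n => e n * e' n) γ)
    (hδ : IsActual (fun n => e n + e' n - e n * e' n) δ)
    (p p' q r : ℝ)
    (hp : Filter.Tendsto (fun n => (freq e (α n) : ℝ)) Filter.atTop (nhds p))
    (hp' : Filter.Tendsto (fun n => (freq e' (β n) : ℝ)) Filter.atTop (nhds p'))
    (hq : Filter.Tendsto (fun n => (freq (fun k => e k * e' k) (γ n) : ℝ))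
      Filter.atTop (nhds q))
    (hr : Filter.Tendsto
      (fun n => (freq (fun k => e k + e' k - e k * e' k) (δ n) : ℝ))
      Filter.atTop (nhds r)) :
    r + q = p + p' := by
  have hsum : ∀ k, (freq (fun k => e k + e' k - e k * e' k) k : ℝ) +
      freq (fun k => e k * e' k) k = freq e k + freq e' k := fun k => by
    exact_mod_cast freq_or_add_freq_and he' k
  exact tendsto_nhds_unique (((hδ.tendsto_freq hr).add (hγ.tendsto_freq hq)).congr hsum)
    ((hα.tendsto_freq hp).add (hβ.tendsto_freq hp'))

theorem stmt7 (e e' α β γ δ : ℕ → ℕ) (he : IsPotential e) (he' : IsPotential e')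
    (hα : IsActual e α) (hβ : IsActual e' β)
    (hγ : IsActual (fun n => e n * e' n) γ)
    (hδ : IsActual (fun n => e n + e' n - e n * e' n) δ)
    (p p' q r : ℝ)
    (hp : Filter.Tendsto (fun n => (freq e (α n) : ℝ)) Filter.atTop (nhds p))
    (hp' : Filter.Tendsto (fun n => (freq e' (β n) : ℝ)) Filter.atTop (nhds p'))
    (hq : Filter.Tendsto (fun n => (freq (fun k => e k * e' k) (γ n) : ℝ))
      Filter.atTop (nhds q))
    (hr : Filter.Tendsto
      (fun n => (freq (fun k => e k + e' k - e k * e' k) (δ n) : ℝ))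
      Filter.atTop (nhds r)) :
    r + q = p + p' :=
  stmt7_general e e' α β γ δ he' hα hβ hγ hδ p p' q r hp hp' hq hr
end

section
/- Let π = [π₁, …, π_m] be a nonempty finite list of elements of {0,1} and let e be the purely periodic potential event e(i) = π_{(rm(i−1, m))+1}, where rm(a, b) is the remainder of a divided by b. Then (e, n ↦ 4nm) is an actual event and its probability (the limit of n ↦ Φ(e)(4nm)) equals (∑_{k=1}^m π_k)/m. -/
/-!
Write `N = q m + r` with `r < m`. The first `q m` terms of an `m`-periodic `0/1` sequence sum
to exactly `q S`, where `S` is the sum over one period, and the remaining `r` terms contribute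
between `0` and `r`. Hence the frequency at `N` differs from `S / m` by at most `m / N`: it equals
`S / m` at multiples of `m`, and beyond `4 n m` all frequencies lie within `1 / (4 n)` of `S / m`.
-/

open Finset

namespace Function.Periodic

theorem nat_mul_add_eq {β : Type*} {f : ℕ → β} {m : ℕ} (hf : Periodic f m) (q i : ℕ) :
    f (q * m + i) = f i := by
  rw [add_comm]; exact_mod_cast hf.nat_mul q i

section AddCommMonoid

variable {M : Type*} [AddCommMonoid M] {f : ℕ → M} {m : ℕ}

theorem sum_range_mul (hf : Periodic f m) (q : ℕ) :
    ∑ i ∈ range (q * m), f i = q • ∑ i ∈ range m, f i := by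
  induction q with
  | zero => simp
  | succ q ih => simp only [add_mul, one_mul, sum_range_add, ih, hf.nat_mul_add_eq, succ_nsmul]

theorem sum_range_eq_div_nsmul_add (hf : Periodic f m) (N : ℕ) :
    ∑ i ∈ range N, f i = (N / m) • ∑ i ∈ range m, f i + ∑ i ∈ range (N % m), f i := by
  conv_lhs => rw [← Nat.div_add_mod' N m]
  simp only [sum_range_add, hf.sum_range_mul, hf.nat_mul_add_eq]

end AddCommMonoid

variable {α : Type*} [Field α] [LinearOrder α] [IsStrictOrderedRing α]
  {f : ℕ → α} {m : ℕ}

theorem average_range_mul (hf : Periodic f m) {q : ℕ} (hq : q ≠ 0) (hm : m ≠ 0) :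
    (∑ i ∈ range (q * m), f i) / (q * m : ℕ) = (∑ i ∈ range m, f i) / m := by
  rw [hf.sum_range_mul, nsmul_eq_mul]
  push_cast
  field_simp

theorem abs_average_sub_le (hf : Periodic f m) (hm : 0 < m)
    (hf₀ : ∀ i, 0 ≤ f i) (hf₁ : ∀ i, f i ≤ 1) {N : ℕ} (hN : 0 < N) :
    |(∑ i ∈ range N, f i) / N - (∑ i ∈ range m, f i) / m| ≤ m / N := by
  set S := ∑ i ∈ range m, f i
  set q := N / m
  set r := N % m
  set R := ∑ i ∈ range r, f i
  have hsum : ∑ i ∈ range N, f i = q * S + R := by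
    rw [hf.sum_range_eq_div_nsmul_add, nsmul_eq_mul]
  have hNqr : (N : α) = q * m + r := by exact_mod_cast (Nat.div_add_mod' N m).symm
  have hS : S ≤ m := by simpa using sum_le_sum fun i (_ : i ∈ range m) => hf₁ i
  have hR : R ≤ r := by simpa using sum_le_sum fun i (_ : i ∈ range r) => hf₁ i
  have hR₀ : 0 ≤ R := sum_nonneg fun i _ => hf₀ i
  have hS₀ : 0 ≤ S := sum_nonneg fun i _ => hf₀ i
  have hrm : (r : α) ≤ m := by exact_mod_cast (Nat.mod_lt N hm).le
  have hmα : (0 : α) < m := by exact_mod_cast hm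
  have hNα : (0 : α) < N := by exact_mod_cast hN
  have hdiff : (∑ i ∈ range N, f i) / N - S / m = (m * R - r * S) / (N * m) := by
    rw [hsum]; field_simp; rw [hNqr]; ring
  have hnum : |m * R - r * S| ≤ m * m := abs_le.2
    ⟨by nlinarith [mul_nonneg hmα.le hR₀],
      by nlinarith [mul_nonneg (Nat.cast_nonneg r : (0 : α) ≤ r) hS₀]⟩
  rw [hdiff, abs_div, abs_of_pos (mul_pos hNα hmα), div_le_div_iff₀ (mul_pos hNα hmα) hNα]
  calc |m * R - r * S| * N ≤ m * m * N := mul_le_mul_of_nonneg_right hnum hNα.le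
    _ = m * (N * m) := by ring

end Function.Periodic

namespace List

theorem periodic_getD_mod {α : Type*} (l : List α) (d : α) :
    Function.Periodic (fun i => l.getD (i % l.length) d) l.length := fun i => by
  simp only [Nat.add_mod_right]

theorem sum_range_getD_mod {M : Type*} [AddCommMonoid M] (l : List M) :
    ∑ i ∈ Finset.range l.length, l.getD (i % l.length) 0 = l.sum := by
  rw [← Fin.sum_univ_getElem, sum_range]
  refine sum_congr rfl fun i _ => ?_
  rw [Nat.mod_eq_of_lt i.isLt, getD_eq_getElem]

theorem getD_mod_mem {α : Type*} {l : List α} (hl : l ≠ []) (d : α) (i : ℕ) :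
    l.getD (i % l.length) d ∈ l := by
  have hi := Nat.mod_lt i (length_pos_iff.2 hl)
  rw [getD_eq_getElem _ _ hi]
  exact getElem_mem hi

end List

theorem freq_eq_average {e f : ℕ → ℕ} (he : ∀ i, e (i + 1) = f i) (N : ℕ) :
    freq e N = (∑ i ∈ range N, (f i : ℚ)) / N := by
  simp only [freq, ← he]
  rw [range_eq_Ico, sum_Ico_add' (fun i => (e i : ℚ)) 0 N 1]
  rfl

theorem isActual_of_abs_freq_sub_le {e : ℕ → ℕ} {c : ℚ} {m : ℕ} (hm : 0 < m)
    (h : ∀ N, 0 < N → |freq e N - c| ≤ m / N) {a : ℕ} (ha : 2 ≤ a) :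
    IsActual e (fun n => a * n * m) := by
  refine ⟨fun n hn => Nat.mul_pos (Nat.mul_pos (by omega) hn) hm,
    fun k n _ hkn => Nat.mul_lt_mul_of_pos_right (Nat.mul_lt_mul_of_pos_left hkn (by omega)) hm,
    fun n hn i j => ?_⟩
  have hnℚ : (0 : ℚ) < n := by exact_mod_cast hn
  have hclose : ∀ i, |freq e (a * n * m + i) - c| ≤ 1 / (2 * n) := fun i => by
    refine (h _ (by positivity)).trans ?_
    rw [div_le_div_iff₀ (by positivity) (by positivity)]
    have ha' : (2 : ℚ) ≤ a := by exact_mod_cast ha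
    have hm' : (1 : ℚ) ≤ m := by exact_mod_cast hm
    push_cast
    nlinarith [(Nat.cast_nonneg i : (0 : ℚ) ≤ i), mul_le_mul_of_nonneg_right ha' hnℚ.le]
  calc |freq e (a * n * m + i) - freq e (a * n * m + j)|
      ≤ |freq e (a * n * m + i) - c| + |c - freq e (a * n * m + j)| := abs_sub_le _ _ _
    _ ≤ 1 / (2 * n) + 1 / (2 * n) :=
      add_le_add (hclose i) (by rw [abs_sub_comm]; exact hclose j)
    _ = 1 / n := by field_simp; norm_num

theorem stmt8 (π : List ℕ) (hπ : π ≠ []) (hbits : ∀ x ∈ π, x ≤ 1)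
    (e : ℕ → ℕ) (he : ∀ i, 1 ≤ i → e i = π.getD ((i - 1) % π.length) 0) :
    IsActual e (fun n => 4 * n * π.length) ∧
    Filter.Tendsto (fun n => (freq e (4 * n * π.length) : ℝ)) Filter.atTop
      (nhds ((π.sum : ℝ) / (π.length : ℝ))) := by
  set f : ℕ → ℚ := fun i => (π.getD (i % π.length) 0 : ℚ)
  have hm : 0 < π.length := List.length_pos_iff.2 hπ
  have hfreq : ∀ N, freq e N = (∑ i ∈ range N, f i) / N :=
    freq_eq_average fun i => by simpa using he (i + 1) (by omega)
  have hf : Function.Periodic f π.length := fun i => by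
    simp only [f, π.periodic_getD_mod 0 i]
  have hS : ∑ i ∈ range π.length, f i = π.sum := by
    simp only [f]; exact_mod_cast π.sum_range_getD_mod
  have hbits' : ∀ i, f i ≤ 1 := fun i => by
    simp only [f]; exact_mod_cast hbits _ (π.getD_mod_mem hπ 0 i)
  refine ⟨isActual_of_abs_freq_sub_le hm (c := π.sum / π.length) (fun N hN => ?_) (by norm_num),
    tendsto_const_nhds.congr' ?_⟩
  · rw [hfreq, ← hS]
    exact hf.abs_average_sub_le hm (fun i => Nat.cast_nonneg _) hbits' hN
  · filter_upwards [Filter.eventually_ge_atTop 1] with n hn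
    rw [hfreq, hf.average_range_mul (by omega) hm.ne', hS, Rat.cast_div, Rat.cast_natCast,
      Rat.cast_natCast]
end

section
/- Let α be a finite list of elements of {0,1} of length ℓ(α) and π a nonempty finite list of elements of {0,1} of length ℓ(π), and let ‖α,π‖ be the regular potential event defined by ‖α,π‖(i) = α_i for 1 ≤ i ≤ ℓ(α) and ‖α,π‖(i) = π_{rm(i−ℓ(α)−1, ℓ(π))+1} for i > ℓ(α), where rm(a,b) is the remainder of a divided by b. Then there exists a strictly increasing γ : ℕ⁺ → ℕ⁺ such that (‖α,π‖, γ) is an actual event and its probability (the limit of n ↦ Φ(‖α,π‖)(γ(n))) equals (∑_{k=1}^{ℓ(π)} π_k)/ℓ(π). -/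
/-- The regular potential event `‖α,π‖`: it equals `α` on indices `1,…,ℓ(α)` and
then repeats `π` periodically. -/
def regEvent (α π : List ℕ) : ℕ → ℕ := fun i =>
  if i ≤ α.length then α.getD (i - 1) 0
  else π.getD ((i - α.length - 1) % π.length) 0

/-- A potential event is regular if it is pointwise equal (on positive indices)
to some `‖α,π‖` with `α`, `π` lists over `{0,1}` and `π` nonempty. -/
def IsRegularEvent (e : ℕ → ℕ) : Prop :=
  ∃ α π : List ℕ, (∀ x ∈ α, x ≤ 1) ∧ (∀ x ∈ π, x ≤ 1) ∧ π ≠ [] ∧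
    ∀ i, 1 ≤ i → e i = regEvent α π i

/-! The partial sums of `‖α,π‖` stay within `ℓ(α) + ℓ(π)` of `m p`, where `p` is the average of
`π`: after the prefix `α` every full period of `π` contributes exactly `ℓ(π) p`. Hence
`|Φ(m) - p| ≤ C / m` for a constant `C`, and `γ(n) = K n` with `K ≥ 2C` makes every frequency
from `γ(n)` on lie within `1 / (2n)` of `p`. -/

open Finset Filter Topology

section OrderedField

variable {K : Type*} [Field K] [LinearOrder K] [IsStrictOrderedRing K]

theorem abs_sum_range_sub_mul_le {f : ℕ → K} {p : K} (hf₀ : ∀ i, 0 ≤ f i) (hf₁ : ∀ i, f i ≤ 1)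
    (hp₀ : 0 ≤ p) (hp₁ : p ≤ 1) (m : ℕ) : |∑ i ∈ range m, f i - m * p| ≤ m := by
  have hsum₀ : 0 ≤ ∑ i ∈ range m, f i := sum_nonneg fun i _ => hf₀ i
  have hsum₁ : ∑ i ∈ range m, f i ≤ m := by
    simpa using sum_le_sum fun i (_ : i ∈ range m) => hf₁ i
  have hm : (0 : K) ≤ m := m.cast_nonneg
  rw [abs_le]
  constructor <;> nlinarith

theorem sum_range_div_le_one {f : ℕ → K} (hf₁ : ∀ i, f i ≤ 1) (n : ℕ) :
    (∑ i ∈ range n, f i) / n ≤ 1 :=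
  div_le_one_of_le₀ (by simpa using sum_le_sum fun i (_ : i ∈ range n) => hf₁ i) n.cast_nonneg

theorem Function.Periodic.sum_range_mul_s11 {g : ℕ → K} {L : ℕ} (hg : Function.Periodic g L)
    (q : ℕ) : ∑ i ∈ range (q * L), g i = q * ∑ i ∈ range L, g i := by
  induction q with
  | zero => simp
  | succ q ih =>
    rw [add_mul, one_mul, sum_range_add, ih, Nat.cast_succ, add_one_mul]
    congr 1
    refine sum_congr rfl fun i _ => ?_
    rw [add_comm]
    exact hg.nat_mul q i

theorem Function.Periodic.abs_sum_range_sub_mul_average_le {g : ℕ → K} {L : ℕ}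
    (hg : Function.Periodic g L) (hL : 0 < L) (hg₀ : ∀ i, 0 ≤ g i) (hg₁ : ∀ i, g i ≤ 1)
    (m : ℕ) : |∑ i ∈ range m, g i - m * ((∑ i ∈ range L, g i) / L)| ≤ L := by
  set a := (∑ i ∈ range L, g i) / L
  have hLK : (L : K) ≠ 0 := by exact_mod_cast hL.ne'
  have ha₀ : 0 ≤ a := div_nonneg (sum_nonneg fun i _ => hg₀ i) L.cast_nonneg
  have ha₁ : a ≤ 1 := sum_range_div_le_one hg₁ L
  obtain ⟨q, r, hr, rfl⟩ : ∃ q r, r < L ∧ m = q * L + r :=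
    ⟨m / L, m % L, Nat.mod_lt m hL, by rw [Nat.mul_comm, Nat.div_add_mod]⟩
  have hshift : ∑ i ∈ range r, g (q * L + i) = ∑ i ∈ range r, g i :=
    sum_congr rfl fun i _ => by rw [add_comm]; exact hg.nat_mul q i
  have hperiods : (q * L : K) * a = q * ∑ i ∈ range L, g i := by
    rw [mul_assoc, mul_div_cancel₀ _ hLK]
  calc |∑ i ∈ range (q * L + r), g i - ((q * L + r : ℕ) : K) * a|
      = |∑ i ∈ range r, g i - r * a| := by
        rw [sum_range_add, hg.sum_range_mul_s11, hshift]
        push_cast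
        rw [add_mul, hperiods]
        ring_nf
    _ ≤ r := abs_sum_range_sub_mul_le hg₀ hg₁ ha₀ ha₁ r
    _ ≤ L := by exact_mod_cast hr.le

end OrderedField

theorem sum_Icc_one_eq_sum_range {M : Type*} [AddCommMonoid M] (f : ℕ → M) (n : ℕ) :
    ∑ i ∈ Icc 1 n, f i = ∑ i ∈ range n, f (i + 1) := by
  rw [← Ico_add_one_right_eq_Icc, sum_Ico_eq_sum_range, Nat.add_sub_cancel]
  simp only [add_comm]

theorem List.sum_range_getD_cast (l : List ℕ) :
    ∑ j ∈ Finset.range l.length, (l.getD j 0 : ℚ) = l.sum := by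
  induction l with
  | nil => simp
  | cons a t ih =>
    rw [List.length_cons, Finset.sum_range_succ']
    simp only [List.getD_cons_succ, List.getD_cons_zero, ih, List.sum_cons]
    push_cast
    ring

theorem List.getD_le_one {l : List ℕ} (h : ∀ x ∈ l, x ≤ 1) (k : ℕ) : l.getD k 0 ≤ 1 := by
  rcases lt_or_ge k l.length with hk | hk
  · rw [List.getD_eq_getElem _ _ hk]
    exact h _ (List.getElem_mem hk)
  · rw [List.getD_eq_default _ _ hk]
    exact Nat.zero_le 1

section RegularEvent

variable {α π : List ℕ}

theorem regEvent_le_one (hα : ∀ x ∈ α, x ≤ 1) (hπ : ∀ x ∈ π, x ≤ 1) (i : ℕ) :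
    regEvent α π i ≤ 1 := by
  unfold regEvent
  split
  · exact List.getD_le_one hα _
  · exact List.getD_le_one hπ _

theorem regEvent_length_add_add_one (j : ℕ) :
    regEvent α π (α.length + j + 1) = π.getD (j % π.length) 0 := by
  have hj : α.length + j + 1 - α.length - 1 = j := by omega
  simp [regEvent, hj]

theorem abs_sum_regEvent_sub_le (hαbits : ∀ x ∈ α, x ≤ 1) (hπbits : ∀ x ∈ π, x ≤ 1)
    (hπ : π ≠ []) (m : ℕ) :
    |∑ i ∈ Icc 1 m, (regEvent α π i : ℚ) - m * ((π.sum : ℚ) / π.length)|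
      ≤ α.length + π.length := by
  set L := π.length
  set g : ℕ → ℚ := fun j => π.getD (j % L) 0
  have hL : 0 < L := List.length_pos_iff.mpr hπ
  have hg : Function.Periodic g L := fun j => by simp [g]
  have hg₀ : ∀ j, 0 ≤ g j := fun j => Nat.cast_nonneg _
  have hg₁ : ∀ j, g j ≤ 1 := fun j => by
    simp only [g]
    exact_mod_cast List.getD_le_one hπbits _
  have hp : (π.sum : ℚ) / L = (∑ j ∈ range L, g j) / L := by
    rw [← List.sum_range_getD_cast]
    exact congrArg (· / (L : ℚ)) <| sum_congr rfl fun j hj => by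
      simp [g, Nat.mod_eq_of_lt (mem_range.mp hj)]
  have he₀ : ∀ i, (0 : ℚ) ≤ regEvent α π (i + 1) := fun i => Nat.cast_nonneg _
  have he₁ : ∀ i, (regEvent α π (i + 1) : ℚ) ≤ 1 := fun i => by
    exact_mod_cast regEvent_le_one hαbits hπbits _
  have hp₀ : (0 : ℚ) ≤ π.sum / L := by positivity
  have hp₁ : (π.sum : ℚ) / L ≤ 1 := hp ▸ sum_range_div_le_one hg₁ L
  rw [sum_Icc_one_eq_sum_range]
  rcases le_or_gt m α.length with hm | hm
  · calc _ ≤ (m : ℚ) := abs_sum_range_sub_mul_le he₀ he₁ hp₀ hp₁ m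
      _ ≤ α.length + L := by
        have : (m : ℚ) ≤ α.length := by exact_mod_cast hm
        linarith [(L.cast_nonneg : (0 : ℚ) ≤ L)]
  · obtain ⟨b, rfl⟩ : ∃ b, m = α.length + b := ⟨m - α.length, by omega⟩
    have htail : ∑ j ∈ range b, (regEvent α π (α.length + j + 1) : ℚ) = ∑ j ∈ range b, g j :=
      sum_congr rfl fun j _ => by rw [regEvent_length_add_add_one]
    calc |∑ i ∈ range (α.length + b), (regEvent α π (i + 1) : ℚ)
            - ((α.length + b : ℕ) : ℚ) * (π.sum / L)|
        = |(∑ i ∈ range α.length, (regEvent α π (i + 1) : ℚ) - α.length * (π.sum / L))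
            + (∑ j ∈ range b, g j - b * ((∑ j ∈ range L, g j) / L))| := by
          rw [sum_range_add, htail, ← hp]
          push_cast
          ring_nf
      _ ≤ α.length + L := (abs_add_le _ _).trans <| add_le_add
          (abs_sum_range_sub_mul_le he₀ he₁ hp₀ hp₁ _)
          (hg.abs_sum_range_sub_mul_average_le hL hg₀ hg₁ b)

end RegularEvent

section ActualEvent

variable {e : ℕ → ℕ} {p C : ℚ}

theorem abs_freq_sub_le_of_abs_sum_sub_le
    (h : ∀ m : ℕ, |∑ i ∈ Icc 1 m, (e i : ℚ) - m * p| ≤ C) {m : ℕ} (hm : 0 < m) :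
    |freq e m - p| ≤ C / m := by
  have hmQ : (0 : ℚ) < m := by exact_mod_cast hm
  have : freq e m - p = (∑ i ∈ Icc 1 m, (e i : ℚ) - m * p) / m := by
    rw [freq]
    field_simp
  rw [this, abs_div, abs_of_pos hmQ]
  exact div_le_div_of_nonneg_right (h m) hmQ.le

theorem exists_isActual_tendsto_of_abs_sum_sub_le
    (h : ∀ m : ℕ, |∑ i ∈ Icc 1 m, (e i : ℚ) - m * p| ≤ C) :
    ∃ γ : ℕ → ℕ, IsActual e γ ∧
      Tendsto (fun n => (freq e (γ n) : ℝ)) atTop (𝓝 (p : ℝ)) := by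
  set K := ⌈2 * C⌉₊ + 1
  have hK : 0 < K := Nat.succ_pos _
  have hC₀ : 0 ≤ C := by simpa using h 0
  have hCK : 2 * C ≤ K := (Nat.le_ceil _).trans (by exact_mod_cast Nat.le_succ _)
  have hclose : ∀ n, 1 ≤ n → ∀ i, |freq e (K * n + i) - p| ≤ 1 / (2 * n) := by
    intro n hn i
    have hnQ : (1 : ℚ) ≤ n := by exact_mod_cast hn
    have hpos : 0 < K * n + i := by positivity
    refine (abs_freq_sub_le_of_abs_sum_sub_le h hpos).trans ?_
    rw [div_le_div_iff₀ (by exact_mod_cast hpos) (by positivity)]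
    push_cast
    nlinarith [(i.cast_nonneg : (0 : ℚ) ≤ i)]
  refine ⟨fun n => K * n, ⟨fun n hn => Nat.one_le_iff_ne_zero.mpr (by positivity),
    fun m n _ hmn => Nat.mul_lt_mul_of_pos_left hmn hK, fun n hn i j => ?_⟩, ?_⟩
  · calc |freq e (K * n + i) - freq e (K * n + j)|
        ≤ |freq e (K * n + i) - p| + |p - freq e (K * n + j)| := abs_sub_le _ p _
      _ ≤ 1 / (2 * n) + 1 / (2 * n) :=
        add_le_add (hclose n hn i) (abs_sub_comm p _ ▸ hclose n hn j)
      _ = 1 / n := by ring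
  · have hlim : Tendsto (fun n => freq e (K * n)) atTop (𝓝 p) := by
      rw [← tendsto_sub_nhds_zero_iff, tendsto_zero_iff_abs_tendsto_zero, Function.comp_def]
      refine tendsto_of_tendsto_of_tendsto_of_le_of_le' tendsto_const_nhds
        tendsto_one_div_atTop_nhds_zero_nat (Eventually.of_forall fun n => abs_nonneg _) ?_
      filter_upwards [eventually_ge_atTop 1] with n hn
      have hnQ : (0 : ℚ) < n := by exact_mod_cast hn
      calc |freq e (K * n) - p| = |freq e (K * n + 0) - p| := rfl
        _ ≤ 1 / (2 * n) := hclose n hn 0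
        _ ≤ 1 / n := one_div_le_one_div_of_le hnQ (by linarith)
    exact (Rat.continuous_coe_real.tendsto p).comp hlim

end ActualEvent

theorem stmt11 (α π : List ℕ) (hαbits : ∀ x ∈ α, x ≤ 1) (hπbits : ∀ x ∈ π, x ≤ 1)
    (hπ : π ≠ []) :
    ∃ γ : ℕ → ℕ, IsActual (regEvent α π) γ ∧
      Filter.Tendsto (fun n => (freq (regEvent α π) (γ n) : ℝ)) Filter.atTop
        (nhds ((π.sum : ℝ) / (π.length : ℝ))) := by
  obtain ⟨γ, hγ, hlim⟩ :=
    exists_isActual_tendsto_of_abs_sum_sub_le (abs_sum_regEvent_sub_le hαbits hπbits hπ)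
  rw [Rat.cast_div, Rat.cast_natCast, Rat.cast_natCast] at hlim
  exact ⟨γ, hγ, hlim⟩
end
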